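/- For integers k and n ≥ 0 and 0 ≤ ℓ ≤ n, if g is a scalar modular form of weight k−n+2ℓ for Γ, then the Rankin–Cohen bracket [g, v̂_n]_{n−ℓ}^{(k−n+2ℓ, −n)} = Σ_{r=0}^{n−ℓ} (−1)^r C(k−n+2ℓ+(n−ℓ)−1, n−ℓ−r) C(−n+(n−ℓ)−1, r) g^{(r)} v̂_n^{(n−ℓ−r)} is a vector-valued modular form of weight k for Γ with respect to ρ_n; moreover the resulting linear map 𝒱_{k,n,ℓ} : M_{k−n+2ℓ}(Γ) → M̂_k^{n+1}(Γ, ρ_n) is injective. -/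

import Mathlib

open Matrix Complex Finset

abbrev SL2R := Matrix.SpecialLinearGroup (Fin 2) ℝ

noncomputable def Jf (γ : SL2R) (z : ℂ) : ℂ := (γ.1 1 0 : ℝ) * z + (γ.1 1 1 : ℝ)

noncomputable def actSL (γ : SL2R) (z : ℂ) : ℂ :=
  ((γ.1 0 0 : ℝ) * z + (γ.1 0 1 : ℝ)) / Jf γ z

/-- Generalized binomial coefficient C(a, r) = a(a−1)⋯(a−r+1)/r! for a ∈ ℤ. -/
noncomputable def gchoose (a : ℤ) (r : ℕ) : ℂ :=
  (∏ i ∈ Finset.range r, ((a : ℂ) - (i : ℂ))) / (r.factorial : ℂ)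

/-- The vector (z₁, z₂)^n. -/
def symVec (n : ℕ) (z₁ z₂ : ℂ) : Fin (n + 1) → ℂ :=
  fun i => z₁ ^ (n - (i : ℕ)) * z₂ ^ (i : ℕ)

/-- v̂_n(z) = (zⁿ, …, z, 1). -/
def vhat (n : ℕ) (z : ℂ) : Fin (n + 1) → ℂ := symVec n z 1

/-- Scalar modular form of weight k for Γ. -/
def IsMF (Γ : Subgroup SL2R) (k : ℤ) (f : ℂ → ℂ) : Prop :=
  DifferentiableOn ℂ f {z : ℂ | 0 < z.im} ∧
    ∀ γ ∈ Γ, ∀ z : ℂ, 0 < z.im → f (actSL γ z) = Jf γ z ^ k * f z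

/-- Vector-valued modular form of weight k for Γ with respect to a real
representation ρ. -/
def IsVVMF {n : ℕ} (Γ : Subgroup SL2R)
    (ρ : SL2R → Matrix (Fin (n + 1)) (Fin (n + 1)) ℝ) (k : ℤ)
    (f : ℂ → Fin (n + 1) → ℂ) : Prop :=
  DifferentiableOn ℂ f {z : ℂ | 0 < z.im} ∧
    ∀ γ ∈ Γ, ∀ z : ℂ, 0 < z.im →
      f (actSL γ z) = Jf γ z ^ k • ((ρ γ).map Complex.ofReal *ᵥ f z)

/-- The Rankin–Cohen bracket
[g, v̂_n]_{n−ℓ}^{(k−n+2ℓ, −n)}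
  = Σ_{r=0}^{n−ℓ} (−1)^r C(k−n+2ℓ+(n−ℓ)−1, n−ℓ−r) C(−n+(n−ℓ)−1, r)
      g⁽ʳ⁾ v̂_n^{(n−ℓ−r)}. -/
noncomputable def Vmap (n ℓ : ℕ) (k : ℤ) (g : ℂ → ℂ) (z : ℂ) : Fin (n + 1) → ℂ :=
  fun i => ∑ r ∈ Finset.range (n - ℓ + 1),
    (-1 : ℂ) ^ r * gchoose (k - n + 2 * ℓ + ((n - ℓ : ℕ) : ℤ) - 1) (n - ℓ - r) *
      gchoose (-(n : ℤ) + ((n - ℓ : ℕ) : ℤ) - 1) r *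
      iteratedDeriv r g z * iteratedDeriv (n - ℓ - r) (vhat n) z i

/-!
Write `c` for the lower-left entry of `γ` and `J = Jf γ z = c z + d`. If `f (γ z) = J ^ w * F z`
near `z`, differentiating `r` times gives the Bol-type formula
`f⁽ʳ⁾ (γ z) = ∑ⱼ (r choose j) (w + r - 1)(w + r - 2)⋯(w + j) c ^ (r - j) J ^ (w + r + j) F⁽ʲ⁾ z`.
Substituting it for both factors of the Rankin–Cohen bracket `[f, h]ₘ` of weights `w, v`, the
coefficient of `F⁽ʲ⁾ H⁽q⁾` becomes a multiple of
`∑ᵣ (-1)ʳ (m choose r) (r choose j) (m - r choose q)`, which vanishes unless `j + q = m`; so the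
bracket has weight `w + v + 2m`. The components of `v̂ₙ` are the monomials `zˢ`, and `ρₙ` makes
`v̂ₙ` a form of weight `-n`, so `𝒱` is this bracket taken componentwise.

Injectivity holds pointwise: the components `z ^ s`, `s ≤ n - ℓ`, give an upper triangular linear
system for `g z, g' z, …, g⁽ⁿ⁻ˡ⁾ z` with nonzero diagonal.
-/

open scoped ContDiff
open UpperHalfPlane Polynomial

local notation "ℍₒ" => upperHalfPlaneSet

lemma hasDerivAt_iteratedDeriv {f : ℂ → ℂ} {s : Set ℂ} (hf : DifferentiableOn ℂ f s)
    (hs : IsOpen s) (r : ℕ) {z : ℂ} (hz : z ∈ s) :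
    HasDerivAt (iteratedDeriv r f) (iteratedDeriv (r + 1) f z) z := by
  rw [iteratedDeriv_succ, iteratedDeriv_eq_iterate]
  exact ((hf.analyticOnNhd hs).iterated_deriv r z hz).differentiableAt.hasDerivAt

lemma DifferentiableOn.iteratedDeriv_of_isOpen {f : ℂ → ℂ} {s : Set ℂ}
    (hf : DifferentiableOn ℂ f s) (hs : IsOpen s) (r : ℕ) :
    DifferentiableOn ℂ (iteratedDeriv r f) s := fun _ hz =>
  (hasDerivAt_iteratedDeriv hf hs r hz).differentiableAt.differentiableWithinAt

lemma iteratedDeriv_pi_apply {ι : Type*} [Fintype ι] {f : ℂ → ι → ℂ} (hf : Differentiable ℂ f)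
    (q : ℕ) (z : ℂ) (i : ι) : iteratedDeriv q f z i = iteratedDeriv q (fun z => f z i) z := by
  induction q generalizing z i with
  | zero => simp
  | succ q ih =>
    have hdiff (j : ι) : Differentiable ℂ (iteratedDeriv q fun z => f z j) :=
      ((differentiable_pi.1 hf j).contDiff (n := ⊤)).differentiable_iteratedDeriv q
        (WithTop.coe_lt_top _)
    rw [iteratedDeriv_succ, iteratedDeriv_succ,
      deriv_pi fun j => by simpa only [← funext fun z => ih z j] using (hdiff j).differentiableAt]
    simp only [← funext fun z => ih z i]

namespace SL2R

lemma coeff_det (γ : SL2R) : γ.1 0 0 * γ.1 1 1 - γ.1 0 1 * γ.1 1 0 = 1 := by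
  have h := γ.2
  rwa [Matrix.det_fin_two] at h

lemma Jf_ne_zero (γ : SL2R) {z : ℂ} (hz : z ∈ ℍₒ) : Jf γ z ≠ 0 := by
  intro h
  have him : γ.1 1 0 * z.im = 0 := by simpa [Jf] using congrArg Complex.im h
  have hre : γ.1 1 0 * z.re + γ.1 1 1 = 0 := by simpa [Jf] using congrArg Complex.re h
  have hc : γ.1 1 0 = 0 := (mul_eq_zero.1 him).resolve_right hz.ne'
  have hd : γ.1 1 1 = 0 := by simpa [hc] using hre
  simpa [hc, hd] using coeff_det γ

lemma im_actSL (γ : SL2R) (z : ℂ) : (actSL γ z).im = z.im / Complex.normSq (Jf γ z) := by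
  rw [actSL, Complex.div_im, div_sub_div_same]
  congr 1
  simp only [Jf, Complex.add_im, Complex.add_re, Complex.mul_im, Complex.mul_re,
    Complex.ofReal_re, Complex.ofReal_im]
  linear_combination z.im * coeff_det γ

lemma actSL_mem (γ : SL2R) {z : ℂ} (hz : z ∈ ℍₒ) : actSL γ z ∈ ℍₒ := by
  show 0 < (actSL γ z).im
  rw [im_actSL]
  exact div_pos hz (Complex.normSq_pos.2 (Jf_ne_zero γ hz))

lemma hasDerivAt_Jf (γ : SL2R) (z : ℂ) : HasDerivAt (Jf γ) (γ.1 1 0 : ℂ) z := by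
  unfold Jf
  simpa only [id, mul_one] using
    ((hasDerivAt_id z).const_mul (γ.1 1 0 : ℂ)).add_const (γ.1 1 1 : ℂ)

lemma hasDerivAt_Jf_zpow (γ : SL2R) (p : ℤ) {z : ℂ} (hz : z ∈ ℍₒ) :
    HasDerivAt (fun z => Jf γ z ^ p) (p * Jf γ z ^ (p - 1) * γ.1 1 0) z :=
  (hasDerivAt_zpow p _ (.inl (Jf_ne_zero γ hz))).comp z (hasDerivAt_Jf γ z)

lemma hasDerivAt_actSL (γ : SL2R) {z : ℂ} (hz : z ∈ ℍₒ) :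
    HasDerivAt (actSL γ) (Jf γ z ^ 2)⁻¹ z := by
  have hnum : HasDerivAt (fun z : ℂ => γ.1 0 0 * z + γ.1 0 1) (γ.1 0 0 : ℂ) z := by
    simpa only [id, mul_one] using
      ((hasDerivAt_id z).const_mul (γ.1 0 0 : ℂ)).add_const (γ.1 0 1 : ℂ)
  have hdet : (γ.1 0 0 : ℂ) * Jf γ z - (γ.1 0 0 * z + γ.1 0 1) * γ.1 1 0 = 1 := by
    have h : (γ.1 0 0 * γ.1 1 1 - γ.1 0 1 * γ.1 1 0 : ℂ) = 1 := by exact_mod_cast coeff_det γ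
    simp only [Jf]
    linear_combination h
  have h := hnum.div (hasDerivAt_Jf γ z) (Jf_ne_zero γ hz)
  rwa [hdet, one_div] at h

end SL2R

lemma choose_mul_choose_mul_choose_eq (m j s q : ℕ) :
    m.choose (j + s) * (j + s).choose j * (m - (j + s)).choose q =
      m.choose j * (m - j).choose q * (m - j - q).choose s := by
  have h1 := Nat.choose_mul (n := m - j) (k := s + q) (s := s) (by omega)
  have h2 := Nat.choose_mul (n := m - j) (k := s + q) (s := q) (by omega)
  rw [Nat.add_sub_cancel_left] at h1
  rw [Nat.add_sub_cancel] at h2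
  rw [Nat.choose_mul (Nat.le_add_right j s), Nat.add_sub_cancel_left, mul_assoc,
    show m - (j + s) = m - j - s by omega, ← h1, Nat.choose_symm_add, h2, mul_assoc]

lemma sum_neg_one_pow_mul_choose_mul_choose_mul_choose (m j q : ℕ) :
    ∑ r ∈ range (m + 1), (-1 : ℤ) ^ r * (m.choose r * r.choose j * (m - r).choose q) =
      if j + q = m then (-1 : ℤ) ^ j * m.choose j else 0 := by
  set t : ℕ → ℤ := fun r => (-1) ^ r * (m.choose r * r.choose j * (m - r).choose q)
  have hvanish : ∀ r ≤ m, ¬(j ≤ r ∧ r + q ≤ m) → t r = 0 := fun r hr h => by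
    rcases not_and_or.1 h with h | h
    · simp [t, Nat.choose_eq_zero_of_lt (not_le.1 h)]
    · simp [t, Nat.choose_eq_zero_of_lt (show m - r < q by omega)]
  by_cases hjq : j + q ≤ m
  · rw [← Finset.sum_subset (s₁ := Finset.Ico j (m - q + 1))
      (fun r hr => by simp only [Finset.mem_Ico, Finset.mem_range] at hr ⊢; omega)
      fun r hr hr' => hvanish r (by simpa [Nat.lt_succ_iff] using hr)
        (by simp only [Finset.mem_Ico] at hr'; omega),
      Finset.sum_Ico_eq_sum_range, show m - q + 1 - j = m - j - q + 1 by omega]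
    have hterm (s : ℕ) : t (j + s) =
        (-1) ^ j * (m.choose j * (m - j).choose q) * ((-1) ^ s * (m - j - q).choose s) := by
      simp only [t]
      rw [← Nat.cast_mul, ← Nat.cast_mul, choose_mul_choose_mul_choose_eq, pow_add]
      push_cast
      ring
    simp only [hterm, ← Finset.mul_sum, Int.alternating_sum_range_choose]
    by_cases hm : j + q = m
    · simp [hm, show m - j = q by omega]
    · simp [hm, show m - j - q ≠ 0 by omega]
  · rw [if_neg (by omega)]
    exact Finset.sum_eq_zero fun r hr =>
      hvanish r (by simpa [Nat.lt_succ_iff] using hr) (by omega)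

lemma descPochhammer_eval_mul_eval_sub (a : ℤ) (p s : ℕ) :
    (descPochhammer ℤ p).eval a * (descPochhammer ℤ s).eval (a - p) =
      (descPochhammer ℤ (p + s)).eval a := by
  rw [← descPochhammer_mul]
  simp [eval_comp]

lemma gchoose_eq_div (a : ℤ) (p : ℕ) :
    gchoose a p = (((descPochhammer ℤ p).eval a : ℤ) : ℂ) / p.factorial := by
  rw [gchoose, descPochhammer_eval_eq_prod_range]
  push_cast
  rfl

lemma gchoose_ne_zero {a : ℤ} {p : ℕ} (h : a < 0 ∨ (p : ℤ) ≤ a) : gchoose a p ≠ 0 := by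
  refine div_ne_zero (Finset.prod_ne_zero_iff.2 fun i hi => sub_ne_zero.2 ?_)
    (by exact_mod_cast Nat.factorial_ne_zero p)
  have := Finset.mem_range.1 hi
  exact_mod_cast (by omega : a ≠ i)

/-- `r! / j! * C(w + r - 1, r - j)`, written as `(r choose j) (w + r - 1)(w + r - 2)⋯(w + j)` so
that it is an integer and vanishes for `j > r`. -/
noncomputable def bolCoeff (w : ℤ) (r j : ℕ) : ℤ :=
  r.choose j * (descPochhammer ℤ (r - j)).eval (w + r - 1)

lemma bolCoeff_self (w : ℤ) (r : ℕ) : bolCoeff w r r = 1 := by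
  simp [bolCoeff]

lemma bolCoeff_of_lt (w : ℤ) {r j : ℕ} (h : r < j) : bolCoeff w r j = 0 := by
  simp [bolCoeff, Nat.choose_eq_zero_of_lt h]

lemma bolCoeff_succ_zero (w : ℤ) (r : ℕ) : bolCoeff w (r + 1) 0 = (w + r) * bolCoeff w r 0 := by
  simp only [bolCoeff, Nat.choose_zero_right, Nat.sub_zero, Nat.cast_one, one_mul,
    descPochhammer_succ_left, eval_mul, eval_X, eval_comp, eval_sub, eval_one]
  push_cast
  ring_nf

lemma bolCoeff_succ_succ (w : ℤ) (r j : ℕ) :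
    bolCoeff w (r + 1) (j + 1) = (w + r + j + 1) * bolCoeff w r (j + 1) + bolCoeff w r j := by
  rcases lt_trichotomy j r with h | rfl | h
  · obtain ⟨p, rfl⟩ : ∃ p, r = j + p + 1 := ⟨r - j - 1, by omega⟩
    have hsucc : bolCoeff w (j + p + 1 + 1) (j + 1) = (j + p + 1 + 1).choose (j + 1) *
        ((w + j + p + 1) * (descPochhammer ℤ p).eval (w + j + p)) := by
      rw [bolCoeff, show j + p + 1 + 1 - (j + 1) = p + 1 by omega, descPochhammer_succ_left]
      simp only [eval_mul, eval_X, eval_comp, eval_sub, eval_one]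
      push_cast
      ring_nf
    have hnext : bolCoeff w (j + p + 1) (j + 1) =
        (j + p + 1).choose (j + 1) * (descPochhammer ℤ p).eval (w + j + p) := by
      rw [bolCoeff, show j + p + 1 - (j + 1) = p by omega]
      push_cast
      ring_nf
    have hcur : bolCoeff w (j + p + 1) j =
        (j + p + 1).choose j * ((descPochhammer ℤ p).eval (w + j + p) * (w + j)) := by
      rw [bolCoeff, show j + p + 1 - j = p + 1 by omega, descPochhammer_succ_eval]
      push_cast
      ring_nf
    have habsorb : ((j + p + 1).choose (j + 1) : ℤ) * (j + 1) = (j + p + 1).choose j * (p + 1) := by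
      exact_mod_cast (show j + p + 1 - j = p + 1 by omega) ▸ Nat.choose_succ_right_eq (j + p + 1) j
    rw [hsucc, hnext, hcur, Nat.choose_succ_succ']
    push_cast
    linear_combination -(descPochhammer ℤ p).eval (w + j + p) * habsorb
  · simp [bolCoeff_self, bolCoeff_of_lt w (Nat.lt_succ_self j)]
  · simp [bolCoeff_of_lt w h, bolCoeff_of_lt w (show r < j + 1 by omega),
      bolCoeff_of_lt w (show r + 1 < j + 1 by omega)]

lemma sum_bolCoeff_succ (w : ℤ) (r : ℕ) (X : ℕ → ℂ) :
    ∑ j ∈ range (r + 2), (bolCoeff w (r + 1) j : ℂ) * X j =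
      ∑ j ∈ range (r + 1), (bolCoeff w r j : ℂ) * ((w + r + j) * X j + X (j + 1)) := by
  have hshift : ∑ j ∈ range (r + 1), (bolCoeff w r j : ℂ) * ((w + r + j) * X j) =
      ∑ j ∈ range (r + 1),
          (bolCoeff w r (j + 1) : ℂ) * ((w + r + (j + 1 : ℕ)) * X (j + 1)) +
        (bolCoeff w r 0 : ℂ) * ((w + r + (0 : ℕ)) * X 0) := by
    have hY := Finset.sum_range_succ' (fun j => (bolCoeff w r j : ℂ) * ((w + r + j) * X j)) (r + 1)
    rwa [Finset.sum_range_succ, bolCoeff_of_lt w (Nat.lt_succ_self r), Int.cast_zero, zero_mul,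
      add_zero] at hY
  rw [Finset.sum_range_succ', bolCoeff_succ_zero]
  simp only [mul_add, Finset.sum_add_distrib]
  rw [hshift, add_right_comm, ← Finset.sum_add_distrib]
  congr 1
  · refine Finset.sum_congr rfl fun j _ => ?_
    rw [bolCoeff_succ_succ]
    push_cast
    ring
  · push_cast
    ring

/-- The right-hand side of the Bol-type formula for `f⁽ʳ⁾ (γ z)` when `f (γ z) = J ^ w * F z`. -/
noncomputable def bolSum (γ : SL2R) (w : ℤ) (F : ℂ → ℂ) (r : ℕ) (z : ℂ) : ℂ :=
  ∑ j ∈ range (r + 1), (bolCoeff w r j : ℂ) *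
    (((γ.1 1 0 : ℝ) : ℂ) ^ (r - j) * Jf γ z ^ (w + r + j) * iteratedDeriv j F z)

lemma hasDerivAt_bolSum (γ : SL2R) (w : ℤ) {F : ℂ → ℂ} (hF : DifferentiableOn ℂ F ℍₒ) (r : ℕ)
    {z : ℂ} (hz : z ∈ ℍₒ) :
    HasDerivAt (bolSum γ w F r) ((Jf γ z ^ 2)⁻¹ * bolSum γ w F (r + 1) z) z := by
  have hJ := SL2R.Jf_ne_zero γ hz
  have hterm : ∀ j ∈ range (r + 1), HasDerivAt (fun z => (bolCoeff w r j : ℂ) *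
        (((γ.1 1 0 : ℝ) : ℂ) ^ (r - j) * Jf γ z ^ (w + r + j) * iteratedDeriv j F z))
      ((bolCoeff w r j : ℂ) * (((γ.1 1 0 : ℝ) : ℂ) ^ (r - j) *
          ((w + r + j : ℤ) * Jf γ z ^ (w + r + j - 1) * (γ.1 1 0 : ℝ)) * iteratedDeriv j F z +
        ((γ.1 1 0 : ℝ) : ℂ) ^ (r - j) * Jf γ z ^ (w + r + j) * iteratedDeriv (j + 1) F z)) z :=
    fun j _ => (((SL2R.hasDerivAt_Jf_zpow γ _ hz).const_mul _).mul
      (hasDerivAt_iteratedDeriv hF isOpen_upperHalfPlaneSet j hz)).const_mul _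
  refine (HasDerivAt.fun_sum hterm).congr_deriv ?_
  rw [bolSum, sum_bolCoeff_succ, Finset.mul_sum]
  refine Finset.sum_congr rfl fun j hj => ?_
  have hjr : j ≤ r := Nat.lt_succ_iff.1 (Finset.mem_range.1 hj)
  have hJpow (a : ℤ) : Jf γ z ^ (a + 2) = Jf γ z ^ a * Jf γ z ^ 2 := by
    rw [zpow_add₀ hJ]
    norm_cast
  rw [show w + ((r + 1 : ℕ) : ℤ) + j = w + r + j - 1 + 2 by push_cast; ring,
    show w + ((r + 1 : ℕ) : ℤ) + ((j + 1 : ℕ) : ℤ) = w + r + j + 2 by push_cast; ring,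
    hJpow, hJpow, show r + 1 - j = r - j + 1 by omega, show r + 1 - (j + 1) = r - j by omega,
    pow_succ ((γ.1 1 0 : ℝ) : ℂ)]
  push_cast
  field_simp

lemma iteratedDeriv_actSL {γ : SL2R} {w : ℤ} {f F : ℂ → ℂ} (hf : DifferentiableOn ℂ f ℍₒ)
    (hF : DifferentiableOn ℂ F ℍₒ) (hfF : ∀ z ∈ ℍₒ, f (actSL γ z) = Jf γ z ^ w * F z) (r : ℕ) :
    ∀ z ∈ ℍₒ, iteratedDeriv r f (actSL γ z) = bolSum γ w F r z := by
  induction r with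
  | zero => simpa [bolSum, bolCoeff_self] using hfF
  | succ r ih =>
    intro z hz
    have hL : HasDerivAt (fun z => iteratedDeriv r f (actSL γ z))
        (iteratedDeriv (r + 1) f (actSL γ z) * (Jf γ z ^ 2)⁻¹) z :=
      (hasDerivAt_iteratedDeriv hf isOpen_upperHalfPlaneSet r (SL2R.actSL_mem γ hz)).comp z
        (SL2R.hasDerivAt_actSL γ hz)
    have hR := (hasDerivAt_bolSum γ w hF r hz).congr_of_eventuallyEq
      (Filter.eventually_of_mem (isOpen_upperHalfPlaneSet.mem_nhds hz) ih)
    have hJ2 : (Jf γ z ^ 2)⁻¹ ≠ 0 := inv_ne_zero (pow_ne_zero 2 (SL2R.Jf_ne_zero γ hz))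
    exact mul_right_cancel₀ hJ2 ((hL.unique hR).trans (mul_comm _ _))

lemma bolSum_eq_sum_range (γ : SL2R) (w : ℤ) (F : ℂ → ℂ) {r N : ℕ} (h : r < N) (z : ℂ) :
    bolSum γ w F r z = ∑ j ∈ range N, (bolCoeff w r j : ℂ) *
      (((γ.1 1 0 : ℝ) : ℂ) ^ (r - j) * Jf γ z ^ (w + r + j) * iteratedDeriv j F z) := by
  refine Finset.sum_subset (range_subset_range.2 h) fun j _ hj => ?_
  rw [bolCoeff_of_lt w (by simpa using hj), Int.cast_zero, zero_mul]

lemma gchoose_mul_gchoose_mul_bolCoeff_mul_bolCoeff (w v : ℤ) {m r : ℕ} (hrm : r ≤ m)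
    (j q : ℕ) :
    (-1 : ℂ) ^ r * gchoose (w + m - 1) (m - r) * gchoose (v + m - 1) r *
        (bolCoeff w r j * bolCoeff v (m - r) q : ℤ) =
      (((-1 : ℤ) ^ r * (m.choose r * r.choose j * (m - r).choose q) : ℤ) : ℂ) *
        ((((descPochhammer ℤ (m - j)).eval (w + m - 1) : ℤ) : ℂ) *
          (((descPochhammer ℤ (m - q)).eval (v + m - 1) : ℤ) : ℂ) / m.factorial) := by
  by_cases hjr : j ≤ r ∧ q ≤ m - r
  · have hw := descPochhammer_eval_mul_eval_sub (w + m - 1) (m - r) (r - j)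
    have hv := descPochhammer_eval_mul_eval_sub (v + m - 1) r (m - r - q)
    rw [show w + m - 1 - ((m - r : ℕ) : ℤ) = w + r - 1 by push_cast [hrm]; ring,
      show m - r + (r - j) = m - j by omega] at hw
    rw [show v + m - 1 - (r : ℤ) = v + ((m - r : ℕ) : ℤ) - 1 by push_cast [hrm]; ring,
      show r + (m - r - q) = m - q by omega] at hv
    simp only [gchoose_eq_div, bolCoeff, ← hw, ← hv, Nat.cast_choose ℂ hrm, Int.cast_mul,
      Int.cast_natCast, Int.cast_pow, Int.cast_neg, Int.cast_one]
    have := (Nat.cast_ne_zero (R := ℂ)).2 (Nat.factorial_ne_zero m)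
    have := (Nat.cast_ne_zero (R := ℂ)).2 (Nat.factorial_ne_zero r)
    have := (Nat.cast_ne_zero (R := ℂ)).2 (Nat.factorial_ne_zero (m - r))
    field_simp
  · rcases not_and_or.1 hjr with h | h
    · simp [bolCoeff, Nat.choose_eq_zero_of_lt (not_le.1 h)]
    · simp [bolCoeff, Nat.choose_eq_zero_of_lt (not_le.1 h)]

lemma sum_gchoose_mul_bolCoeff (w v : ℤ) (m j q : ℕ) :
    ∑ r ∈ range (m + 1), (-1 : ℂ) ^ r * gchoose (w + m - 1) (m - r) *
        gchoose (v + m - 1) r * (bolCoeff w r j * bolCoeff v (m - r) q : ℤ) =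
      if j + q = m then (-1) ^ j * gchoose (w + m - 1) (m - j) * gchoose (v + m - 1) j else 0 := by
  rw [Finset.sum_congr rfl fun r hr => gchoose_mul_gchoose_mul_bolCoeff_mul_bolCoeff w v
      (Nat.lt_succ_iff.1 (Finset.mem_range.1 hr)) j q,
    ← Finset.sum_mul, ← Int.cast_sum, sum_neg_one_pow_mul_choose_mul_choose_mul_choose]
  split_ifs with hjq
  · rw [show m - q = j by omega, gchoose_eq_div, gchoose_eq_div]
    push_cast
    rw [Nat.cast_choose ℂ (show j ≤ m by omega)]
    have := (Nat.cast_ne_zero (R := ℂ)).2 (Nat.factorial_ne_zero m)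
    have := (Nat.cast_ne_zero (R := ℂ)).2 (Nat.factorial_ne_zero j)
    have := (Nat.cast_ne_zero (R := ℂ)).2 (Nat.factorial_ne_zero (m - j))
    field_simp
  · simp

lemma bolCoeff_term_mul_bolCoeff_term {c J : ℂ} (hJ : J ≠ 0) (w v : ℤ) {m r : ℕ} (hrm : r ≤ m)
    (j q : ℕ) (a b : ℂ) :
    (bolCoeff w r j : ℂ) * (c ^ (r - j) * J ^ (w + r + j) * a) *
        ((bolCoeff v (m - r) q : ℂ) * (c ^ (m - r - q) * J ^ (v + (m - r : ℕ) + q) * b)) =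
      (bolCoeff w r j * bolCoeff v (m - r) q : ℤ) *
        (c ^ (m - j - q) * J ^ (w + v + m + j + q) * (a * b)) := by
  by_cases hjq : j ≤ r ∧ q ≤ m - r
  · have hc : c ^ (r - j) * c ^ (m - r - q) = c ^ (m - j - q) := by
      rw [← pow_add]
      congr 1
      omega
    have hJpow : J ^ (w + r + j) * J ^ (v + (m - r : ℕ) + q) = J ^ (w + v + m + j + q) := by
      rw [← zpow_add₀ hJ]
      congr 1
      push_cast [hrm]
      ring
    rw [← hc, ← hJpow]
    push_cast
    ring
  · rcases not_and_or.1 hjq with h | h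
    · simp [bolCoeff_of_lt w (not_le.1 h)]
    · simp [bolCoeff_of_lt v (not_le.1 h)]

/-- The Rankin–Cohen bracket `[f, h]ₘ^(w, v)`. -/
noncomputable def rankinCohen (w v : ℤ) (m : ℕ) (f h : ℂ → ℂ) (z : ℂ) : ℂ :=
  ∑ r ∈ range (m + 1), (-1 : ℂ) ^ r * gchoose (w + m - 1) (m - r) *
    gchoose (v + m - 1) r * iteratedDeriv r f z * iteratedDeriv (m - r) h z

theorem rankinCohen_actSL {γ : SL2R} {w v : ℤ} {f F h H : ℂ → ℂ}
    (hf : DifferentiableOn ℂ f ℍₒ) (hF : DifferentiableOn ℂ F ℍₒ)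
    (hh : DifferentiableOn ℂ h ℍₒ) (hH : DifferentiableOn ℂ H ℍₒ)
    (hfF : ∀ z ∈ ℍₒ, f (actSL γ z) = Jf γ z ^ w * F z)
    (hhH : ∀ z ∈ ℍₒ, h (actSL γ z) = Jf γ z ^ v * H z) (m : ℕ) {z : ℂ} (hz : z ∈ ℍₒ) :
    rankinCohen w v m f h (actSL γ z) = Jf γ z ^ (w + v + 2 * m) * rankinCohen w v m F H z := by
  set c : ℂ := ((γ.1 1 0 : ℝ) : ℂ)
  set J := Jf γ z
  have hJ : J ≠ 0 := SL2R.Jf_ne_zero γ hz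
  set X : ℕ → ℕ → ℂ := fun j q =>
    c ^ (m - j - q) * J ^ (w + v + m + j + q) * (iteratedDeriv j F z * iteratedDeriv q H z)
  calc rankinCohen w v m f h (actSL γ z)
      = ∑ r ∈ range (m + 1), ∑ j ∈ range (m + 1), ∑ q ∈ range (m + 1),
          (-1 : ℂ) ^ r * gchoose (w + m - 1) (m - r) * gchoose (v + m - 1) r *
            ((bolCoeff w r j * bolCoeff v (m - r) q : ℤ) * X j q) := by
        refine Finset.sum_congr rfl fun r hr => ?_
        have hrm : r < m + 1 := Finset.mem_range.1 hr
        rw [iteratedDeriv_actSL hf hF hfF r z hz, iteratedDeriv_actSL hh hH hhH (m - r) z hz,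
          bolSum_eq_sum_range γ w F hrm, bolSum_eq_sum_range γ v H (show m - r < m + 1 by omega),
          mul_assoc, Finset.sum_mul_sum, Finset.mul_sum]
        refine Finset.sum_congr rfl fun j _ => ?_
        rw [Finset.mul_sum]
        exact Finset.sum_congr rfl fun q _ => by
          rw [bolCoeff_term_mul_bolCoeff_term hJ w v (Nat.lt_succ_iff.1 hrm)]
    _ = ∑ j ∈ range (m + 1), ∑ q ∈ range (m + 1),
          (∑ r ∈ range (m + 1), (-1 : ℂ) ^ r * gchoose (w + m - 1) (m - r) *
            gchoose (v + m - 1) r * (bolCoeff w r j * bolCoeff v (m - r) q : ℤ)) * X j q := by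
        rw [Finset.sum_comm]
        refine Finset.sum_congr rfl fun j _ => ?_
        rw [Finset.sum_comm]
        refine Finset.sum_congr rfl fun q _ => ?_
        rw [Finset.sum_mul]
        exact Finset.sum_congr rfl fun r _ => by ring
    _ = ∑ j ∈ range (m + 1),
          (-1) ^ j * gchoose (w + m - 1) (m - j) * gchoose (v + m - 1) j * X j (m - j) := by
        refine Finset.sum_congr rfl fun j hj => ?_
        have hjm : j ≤ m := Nat.lt_succ_iff.1 (Finset.mem_range.1 hj)
        simp only [sum_gchoose_mul_bolCoeff]
        rw [Finset.sum_eq_single_of_mem (m - j) (Finset.mem_range.2 (by omega))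
          fun q _ hq => by rw [if_neg (by omega), zero_mul], if_pos (by omega)]
    _ = J ^ (w + v + 2 * m) * rankinCohen w v m F H z := by
        rw [rankinCohen, Finset.mul_sum]
        refine Finset.sum_congr rfl fun j hj => ?_
        have hjm : j ≤ m := Nat.lt_succ_iff.1 (Finset.mem_range.1 hj)
        simp only [X, Nat.sub_self, pow_zero, one_mul]
        rw [show w + v + m + j + ((m - j : ℕ) : ℤ) = w + v + 2 * m by push_cast [hjm]; ring]
        ring

lemma differentiableOn_rankinCohen (w v : ℤ) (m : ℕ) {f h : ℂ → ℂ} {s : Set ℂ}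
    (hf : DifferentiableOn ℂ f s) (hh : DifferentiableOn ℂ h s) (hs : IsOpen s) :
    DifferentiableOn ℂ (rankinCohen w v m f h) s := by
  unfold rankinCohen
  refine DifferentiableOn.fun_sum fun r _ => ?_
  exact ((hf.iteratedDeriv_of_isOpen hs r).const_mul _).mul (hh.iteratedDeriv_of_isOpen hs _)

lemma rankinCohen_fun_sum_const_mul (w v : ℤ) (m : ℕ) (f : ℂ → ℂ) {ι : Type*} (s : Finset ι)
    (a : ι → ℂ) {h : ι → ℂ → ℂ} (hh : ∀ p, Differentiable ℂ (h p)) (z : ℂ) :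
    rankinCohen w v m f (fun z => ∑ p ∈ s, a p * h p z) z =
      ∑ p ∈ s, a p * rankinCohen w v m f (h p) z := by
  simp only [rankinCohen, Finset.mul_sum]
  rw [Finset.sum_comm]
  refine Finset.sum_congr rfl fun r _ => ?_
  rw [iteratedDeriv_fun_sum (f := fun p z => a p * h p z)
    fun p _ => (contDiff_const.mul (hh p).contDiff).contDiffAt, Finset.mul_sum]
  refine Finset.sum_congr rfl fun p _ => ?_
  rw [iteratedDeriv_const_mul_field]
  ring

lemma eq_of_rankinCohen_pow_eq {w v : ℤ} {m : ℕ} (hw : 1 ≤ w) (hv : v + m ≤ 0) {f F : ℂ → ℂ}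
    {z : ℂ} (h : ∀ s ≤ m, rankinCohen w v m f (· ^ s) z = rankinCohen w v m F (· ^ s) z) :
    f z = F z := by
  let M : Matrix (Fin (m + 1)) (Fin (m + 1)) ℂ := fun p r =>
    (-1) ^ (r : ℕ) * gchoose (w + m - 1) (m - r) * gchoose (v + m - 1) r *
      iteratedDeriv (m - r) (· ^ (m - p)) z
  have hM (f : ℂ → ℂ) : M *ᵥ (fun r : Fin (m + 1) => iteratedDeriv r f z) =
      fun p : Fin (m + 1) => rankinCohen w v m f (· ^ (m - p)) z := by
    funext p
    rw [Matrix.mulVec, dotProduct, rankinCohen, ← Fin.sum_univ_eq_sum_range]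
    exact Finset.sum_congr rfl fun r _ => by ring
  have hupper : M.IsUpperTriangular := fun p r hrp => by
    have hrp : (r : ℕ) < p := hrp
    simp [M, Nat.descFactorial_eq_zero_iff_lt.2 (show m - p < m - r by omega)]
  have hdiag (p : Fin (m + 1)) : M p p ≠ 0 := by
    simp only [M, iteratedDeriv_pow, Nat.descFactorial_self, Nat.sub_self, pow_zero, mul_one]
    refine mul_ne_zero (mul_ne_zero (mul_ne_zero (pow_ne_zero _ (by norm_num))
      (gchoose_ne_zero (.inr (by omega)))) (gchoose_ne_zero (.inl (by omega))))
      (by exact_mod_cast Nat.factorial_ne_zero _)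
  have hunit : IsUnit M := by
    rw [Matrix.isUnit_iff_isUnit_det, Matrix.det_of_isUpperTriangular hupper]
    exact (Finset.prod_ne_zero_iff.2 fun p _ => hdiag p).isUnit
  have hderiv : (fun r : Fin (m + 1) => iteratedDeriv r f z) =
      fun r : Fin (m + 1) => iteratedDeriv r F z :=
    Matrix.mulVec_injective_iff_isUnit.2 hunit
      (by rw [hM f, hM F]; exact funext fun p => h _ (by omega))
  simpa using congrFun hderiv 0

lemma vhat_apply (n : ℕ) (z : ℂ) (i : Fin (n + 1)) : vhat n z i = z ^ (n - i) := by
  simp [vhat, symVec]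

lemma differentiable_vhat (n : ℕ) : Differentiable ℂ (vhat n) :=
  differentiable_pi.2 fun i => by simp only [vhat_apply]; fun_prop

lemma symVec_mul_mul (n : ℕ) (t x y : ℂ) : symVec n (x * t) (y * t) = t ^ n • symVec n x y := by
  funext i
  simp only [symVec, Pi.smul_apply, smul_eq_mul, mul_pow]
  rw [← pow_sub_mul_pow t (Nat.lt_succ_iff.1 i.2)]
  ring

lemma vhat_actSL {n : ℕ} {γ : SL2R} {R : Matrix (Fin (n + 1)) (Fin (n + 1)) ℂ}
    (hR : ∀ z₁ z₂ : ℂ, R *ᵥ symVec n z₁ z₂ =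
      symVec n ((γ.1 0 0 : ℝ) * z₁ + (γ.1 0 1 : ℝ) * z₂) ((γ.1 1 0 : ℝ) * z₁ + (γ.1 1 1 : ℝ) * z₂))
    {z : ℂ} (hz : z ∈ ℍₒ) : vhat n (actSL γ z) = Jf γ z ^ (-(n : ℤ)) • (R *ᵥ vhat n z) := by
  have hJ := SL2R.Jf_ne_zero γ hz
  have hnum : (γ.1 0 0 : ℝ) * z + (γ.1 0 1 : ℝ) * 1 = actSL γ z * Jf γ z := by
    rw [actSL, div_mul_cancel₀ _ hJ, mul_one]
  have hden : (γ.1 1 0 : ℝ) * z + (γ.1 1 1 : ℝ) * 1 = 1 * Jf γ z := by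
    rw [Jf]
    ring
  rw [vhat, vhat, hR, hnum, hden, symVec_mul_mul, smul_smul, ← zpow_natCast, ← zpow_add₀ hJ,
    neg_add_cancel, zpow_zero, one_smul]

lemma Vmap_apply (n ℓ : ℕ) (k : ℤ) (g : ℂ → ℂ) (z : ℂ) (i : Fin (n + 1)) :
    Vmap n ℓ k g z i = rankinCohen (k - n + 2 * ℓ) (-n) (n - ℓ) g (· ^ (n - i)) z := by
  simp only [Vmap, rankinCohen, iteratedDeriv_pi_apply (differentiable_vhat n), vhat_apply]

lemma differentiableOn_Vmap (n ℓ : ℕ) (k : ℤ) {g : ℂ → ℂ} (hg : DifferentiableOn ℂ g ℍₒ) :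
    DifferentiableOn ℂ (Vmap n ℓ k g) ℍₒ :=
  differentiableOn_pi.2 fun i =>
    (differentiableOn_rankinCohen _ _ _ hg (differentiable_pow _).differentiableOn
      isOpen_upperHalfPlaneSet).congr fun z _ => Vmap_apply n ℓ k g z i

lemma Vmap_actSL {n ℓ : ℕ} (hℓ : ℓ ≤ n) (k : ℤ) {γ : SL2R}
    {R : Matrix (Fin (n + 1)) (Fin (n + 1)) ℂ}
    (hR : ∀ z₁ z₂ : ℂ, R *ᵥ symVec n z₁ z₂ =
      symVec n ((γ.1 0 0 : ℝ) * z₁ + (γ.1 0 1 : ℝ) * z₂) ((γ.1 1 0 : ℝ) * z₁ + (γ.1 1 1 : ℝ) * z₂))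
    {g : ℂ → ℂ} (hg : DifferentiableOn ℂ g ℍₒ)
    (hgγ : ∀ z ∈ ℍₒ, g (actSL γ z) = Jf γ z ^ (k - n + 2 * ℓ) * g z) {z : ℂ} (hz : z ∈ ℍₒ) :
    Vmap n ℓ k g (actSL γ z) = Jf γ z ^ k • (R *ᵥ Vmap n ℓ k g z) := by
  funext i
  have hpow : ∀ z ∈ ℍₒ, actSL γ z ^ (n - i) =
      Jf γ z ^ (-(n : ℤ)) * ∑ p, R i p * z ^ (n - p) := fun z hz => by
    simpa [vhat_apply, Matrix.mulVec, dotProduct] using congrFun (vhat_actSL hR hz) i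
  rw [Pi.smul_apply, smul_eq_mul, Vmap_apply,
    rankinCohen_actSL hg hg (differentiable_pow _).differentiableOn
      (Differentiable.differentiableOn (by fun_prop)) hgγ hpow (n - ℓ) hz,
    rankinCohen_fun_sum_const_mul _ _ _ _ _ _ fun p => differentiable_pow _,
    show k - n + 2 * ℓ + -(n : ℤ) + 2 * ((n - ℓ : ℕ) : ℤ) = k by push_cast [hℓ]; ring]
  simp only [Matrix.mulVec, dotProduct, Vmap_apply]

lemma eq_of_Vmap_eq {n ℓ : ℕ} {k : ℤ} (hk : 1 ≤ k - n + 2 * ℓ) {g h : ℂ → ℂ} {z : ℂ}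
    (hgh : Vmap n ℓ k g z = Vmap n ℓ k h z) : g z = h z :=
  eq_of_rankinCohen_pow_eq (v := -n) (m := n - ℓ) hk (by omega) fun s hs => by
    simpa [Vmap_apply, show n - (n - s) = s by omega] using congrFun hgh ⟨n - s, by omega⟩

/-- For 0 ≤ ℓ ≤ n and g ∈ M_{k−n+2ℓ}(Γ), the bracket [g, v̂_n]_{n−ℓ}^{(k−n+2ℓ,−n)}
is a vector-valued modular form of weight k with respect to ρ_n, and the
resulting linear map 𝒱_{k,n,ℓ} : M_{k−n+2ℓ}(Γ) → M̂_k^{n+1}(Γ,ρ_n) is injective. -/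
theorem Vmap_modular_and_injective (n ℓ : ℕ) (hℓ : ℓ ≤ n) (k : ℤ)
    (hk : 1 ≤ k - n + 2 * ℓ) (Γ : Subgroup SL2R)
    (ρ : SL2R → Matrix (Fin (n + 1)) (Fin (n + 1)) ℝ)
    (hρ : ∀ (γ : SL2R) (z₁ z₂ : ℂ),
      (ρ γ).map (Complex.ofReal) *ᵥ symVec n z₁ z₂ =
        symVec n ((γ.1 0 0 : ℝ) * z₁ + (γ.1 0 1 : ℝ) * z₂)
          ((γ.1 1 0 : ℝ) * z₁ + (γ.1 1 1 : ℝ) * z₂)) :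
    (∀ g : ℂ → ℂ, IsMF Γ (k - n + 2 * ℓ) g → IsVVMF Γ ρ k (Vmap n ℓ k g)) ∧
      ∀ g h : ℂ → ℂ, IsMF Γ (k - n + 2 * ℓ) g → IsMF Γ (k - n + 2 * ℓ) h →
        (∀ z : ℂ, 0 < z.im → Vmap n ℓ k g z = Vmap n ℓ k h z) →
        ∀ z : ℂ, 0 < z.im → g z = h z :=
  ⟨fun _ hg => ⟨differentiableOn_Vmap n ℓ k hg.1,
      fun γ hγ _ hz => Vmap_actSL hℓ k (hρ γ) hg.1 (hg.2 γ hγ) hz⟩,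
    fun _ _ _ _ hgh z hz => eq_of_Vmap_eq hk (hgh z hz)⟩
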